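/- Let G be a finite simple graph, k ≥ 3, and L a k-list assignment of G. Let B ⊆ G be a bug whose root r has degree at most 1 in G. Then B is safe in G provided that |B| ≥ 2, or there are no edges between B and G − B, or |G| is not congruent to 0 modulo k. -/

import Mathlib

open SimpleGraph

variable {V : Type*}

/-- `n mod* k`: the unique `m ∈ {1,…,k}` with `n ≡ m (mod k)`. -/
def modStar (n k : ℕ) : ℕ := if n % k = 0 then k else n % k

/-- The degree of vertex `v` in `G`. -/
noncomputable def deg (G : SimpleGraph V) (v : V) : ℕ := Set.ncard {u | G.Adj v u}

/-- The number of edges of the induced subgraph `G[A]`. -/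
noncomputable def edgesWithin (G : SimpleGraph V) (A : Finset V) : ℕ :=
  Set.ncard {e : Sym2 V | e ∈ G.edgeSet ∧ ∀ v ∈ e, v ∈ A}

/-- The number of vertices of degree 1 in `G`. -/
noncomputable def V1count (G : SimpleGraph V) : ℕ := Set.ncard {v | deg G v = 1}

/-- `f` is a strongly equitable (SE) `L`-coloring of the induced subgraph `G[W]`:
a proper coloring from the lists in which every color class has at most
`⌈|W|/k⌉` vertices and at most `|W| mod* k` color classes are full. -/
def IsSEColoringOn [Fintype V] [DecidableEq V] (G : SimpleGraph V) (k : ℕ)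
    (L : V → Finset ℕ) (W : Finset V) (f : V → ℕ) : Prop :=
  (∀ v ∈ W, f v ∈ L v) ∧
  (∀ u ∈ W, ∀ v ∈ W, G.Adj u v → f u ≠ f v) ∧
  (∀ c : ℕ, (W.filter fun v => f v = c).card ≤ (W.card + k - 1) / k) ∧
  ((W.image f).filter fun c => (W.filter fun v => f v = c).card = (W.card + k - 1) / k).card
    ≤ modStar W.card k

/-- `G` is strongly equitably `k`-choosable. -/
def SEChoosable [Fintype V] [DecidableEq V] (G : SimpleGraph V) (k : ℕ) : Prop :=
  ∀ L : V → Finset ℕ, (∀ v, (L v).card = k) → ∃ f : V → ℕ, IsSEColoringOn G k L Finset.univ f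

/-- `S` is safe in `G[U]` (w.r.t. the `k`-list assignment `L`): every SE `L`-coloring of
`G[U] − S` extends to an SE `L`-coloring of `G[U]`. -/
def SafeIn [Fintype V] [DecidableEq V] (G : SimpleGraph V) (k : ℕ)
    (L : V → Finset ℕ) (U S : Finset V) : Prop :=
  ∀ f : V → ℕ, IsSEColoringOn G k L (U \ S) f →
    ∃ g : V → ℕ, (∀ v ∈ U \ S, g v = f v) ∧ IsSEColoringOn G k L U g

/-- The potential `ρ_G^k(A)` (for `k ∈ {3,4}`). -/
noncomputable def rhoA (G : SimpleGraph V) (k : ℕ) (A : Finset V) : ℤ :=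
  (if k = 3 then 6 else 4) * (edgesWithin G A : ℤ) - (if k = 3 then 7 else 5) * (A.card : ℤ)
    + (if k = 3 then 3 else 2) * (Set.ncard {v | v ∈ A ∧ deg G v = 1} : ℤ)

/-- `ρ_G^k`: the maximum of `ρ_G^k(A)` over all `A ⊆ V(G)`. -/
noncomputable def rhoMax [Fintype V] [DecidableEq V] (G : SimpleGraph V) (k : ℕ) : ℤ :=
  ((Finset.univ : Finset (Finset V)).image (rhoA G k)).max'
    (Finset.image_nonempty.mpr ⟨∅, Finset.mem_univ ∅⟩)

/-- `σ_G^k`: `|V_1(G)| mod 2` if `k = 4`, and `0` if `k = 3`. -/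
noncomputable def sigmaK (G : SimpleGraph V) (k : ℕ) : ℤ :=
  if k = 4 then ((V1count G % 2 : ℕ) : ℤ) else 0

/-- `(G, L)` is a minimal counterexample for `k`: `L` is a `k`-list assignment,
`ρ_G^k ≤ 2 − σ_G^k`, `G` has no SE `L`-coloring, and every smaller graph (measured by
`|H| + |V_1(H)|`) satisfying the potential condition is SE colorable from every
`k`-list assignment. -/
def MinCounterexample [Fintype V] [DecidableEq V] (G : SimpleGraph V) (k : ℕ)
    (L : V → Finset ℕ) : Prop :=
  (∀ v, (L v).card = k) ∧
  rhoMax G k ≤ 2 - sigmaK G k ∧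
  (¬ ∃ f : V → ℕ, IsSEColoringOn G k L Finset.univ f) ∧
  ∀ (m : ℕ) (H : SimpleGraph (Fin m)) (L' : Fin m → Finset ℕ),
    (∀ v, (L' v).card = k) →
    rhoMax H k ≤ 2 - sigmaK H k →
    m + V1count H < Fintype.card V + V1count G →
    ∃ f : Fin m → ℕ, IsSEColoringOn H k L' Finset.univ f

/-- `B` is a bug in `G` with root `r`: a connected induced subgraph in which every
vertex other than possibly `r` has degree at most 2 in `G`. -/
def IsBug (G : SimpleGraph V) (B : Finset V) (r : V) : Prop :=
  r ∈ B ∧ (G.induce (↑B : Set V)).Connected ∧ ∀ v ∈ B, v ≠ r → deg G v ≤ 2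

/-- The closed neighborhood `N[B]`. -/
def closedNbhd (G : SimpleGraph V) (B : Finset V) : Set V :=
  {v | v ∈ B ∨ ∃ u ∈ B, G.Adj u v}

/-- `λ_B`: the number of plain 2-threads `P` with `r ∈ P ⊆ N[B]`; such a thread
`s x y a` is recorded by its middle edge `s(x, y)`. -/
noncomputable def lambdaB (G : SimpleGraph V) (B : Finset V) (r : V) : ℕ :=
  Set.ncard {e : Sym2 V | ∃ s x y a : V, e = s(x, y) ∧
    3 ≤ deg G s ∧ deg G x ≤ 2 ∧ deg G y ≤ 2 ∧ 3 ≤ deg G a ∧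
    G.Adj s x ∧ G.Adj x y ∧ G.Adj y a ∧ s ≠ a ∧
    r ∈ ({s, x, y, a} : Set V) ∧
    s ∈ closedNbhd G B ∧ x ∈ closedNbhd G B ∧ y ∈ closedNbhd G B ∧ a ∈ closedNbhd G B}

/-- `v` is a body vertex for root `r`: `v ≠ r` and `v` lies on a loose or closed
thread ending at `r`. -/
def IsBodyVertex (G : SimpleGraph V) (r v : V) : Prop :=
  v ≠ r ∧ 3 ≤ deg G r ∧
    ((∃ (a : V) (P : G.Walk r a), P.IsPath ∧ deg G a = 1 ∧
        (∀ u ∈ P.support, u ≠ r → u ≠ a → deg G u ≤ 2) ∧ v ∈ P.support) ∨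
     (∃ P : G.Walk r r, P.IsCycle ∧
        (∀ u ∈ P.support, u ≠ r → deg G u ≤ 2) ∧ v ∈ P.support))

/-- `π_B`: the number of body vertices in `B`. -/
noncomputable def piB (G : SimpleGraph V) (B : Finset V) (r : V) : ℕ :=
  Set.ncard {v | v ∈ B ∧ IsBodyVertex G r v}

/-- A wishbone: a bug `B` with root `r ∈ V_k(G)`, `d_B(r) = d_G(r)`, `|B| = k+1`,
`λ_B = 0` and `π_B = 2`. -/
def IsWishbone [Fintype V] (G : SimpleGraph V) (k : ℕ) (B : Finset V) (r : V) : Prop :=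
  IsBug G B r ∧ deg G r = k ∧ (∀ u, G.Adj r u → u ∈ B) ∧
    B.card = k + 1 ∧ lambdaB G B r = 0 ∧ piB G B r = 2

/-- A jellyfish: a bug `B` with root `r ∈ V_k(G)`, `d_B(r) = d_G(r)`, `|B| = k+1`,
`λ_B = 0` and `π_B = 1`. -/
def IsJellyfish [Fintype V] (G : SimpleGraph V) (k : ℕ) (B : Finset V) (r : V) : Prop :=
  IsBug G B r ∧ deg G r = k ∧ (∀ u, G.Adj r u → u ∈ B) ∧
    B.card = k + 1 ∧ lambdaB G B r = 0 ∧ piB G B r = 1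

/-- `B` is a maximal bug with root `r`. -/
def IsMaximalBug (G : SimpleGraph V) (B : Finset V) (r : V) : Prop :=
  IsBug G B r ∧ ∀ B' : Finset V, IsBug G B' r → B ⊆ B' → B' = B

/-- A fork: a maximal bug `B = B(r)` with root `r` of degree `k−1` or `k`,
`|B| = d(r) + 2`, `λ_B = 1` and `π_B = 0`. -/
def IsFork (G : SimpleGraph V) (k : ℕ) (B : Finset V) (r : V) : Prop :=
  IsMaximalBug G B r ∧ (deg G r = k - 1 ∨ deg G r = k) ∧
    B.card = deg G r + 2 ∧ lambdaB G B r = 1 ∧ piB G B r = 0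

/-- `X`: the union of all extreme sets of `G` (w.r.t. `ρ_G^k`). -/
noncomputable def extremeUnion [Fintype V] [DecidableEq V] (G : SimpleGraph V) (k : ℕ) : Set V :=
  {v | ∃ A : Finset V, A.Nonempty ∧ rhoA G k A = rhoMax G k ∧ v ∈ A}

/-- `G` has an equitable `k`-coloring: a proper coloring with `k` colors in which the
sizes of any two color classes differ by at most 1. -/
def HasEquitableColoring [Fintype V] [DecidableEq V] (G : SimpleGraph V) (k : ℕ) : Prop :=
  ∃ f : V → Fin k, (∀ ⦃u v⦄, G.Adj u v → f u ≠ f v) ∧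
    ∀ c₁ c₂ : Fin k,
      (Finset.univ.filter fun v => f v = c₁).card ≤ (Finset.univ.filter fun v => f v = c₂).card + 1

/-!
The bug is a path ending at the root, and only its other end may have a neighbor outside it.
Extend the coloring greedily along the path towards the root. A vertex joining a coloring of `n`
vertices must avoid the colors of its colored neighbors and, unless `k ∣ n`, the full colors, of
which there are at most `n mod k`. Every vertex after the first sees only its predecessor, and
the predecessor's color is full or leaves room for one more full color, so its list always has a
free color. The first vertex can only be stuck when `n ≡ -1 (mod k)` and it has an outside
neighbor; then its neighbor on the path is colored first, after which `k ∣ n`, and two colored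
neighbors are harmless because `k ≥ 3`.
-/

section Arithmetic

variable {k : ℕ}

lemma add_sub_one_div_of_mod_eq_zero (hk : 0 < k) (n : ℕ) (h : n % k = 0) :
    (n + k - 1) / k = n / k := by
  have := Nat.div_add_mod n k
  rw [show n + k - 1 = (k - 1) + k * (n / k) by omega, Nat.add_mul_div_left _ _ hk,
    Nat.div_eq_of_lt (by omega), zero_add]

lemma add_sub_one_div_of_mod_ne_zero (hk : 0 < k) (n : ℕ) (h : n % k ≠ 0) :
    (n + k - 1) / k = n / k + 1 := by
  have := Nat.div_add_mod n k
  have := Nat.mod_lt n hk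
  rw [show n + k - 1 = (n % k - 1) + k * (n / k + 1) by rw [Nat.mul_add_one]; omega,
    Nat.add_mul_div_left _ _ hk, Nat.div_eq_of_lt (by omega), zero_add]

lemma add_one_add_sub_one_div (hk : 0 < k) (n : ℕ) : (n + 1 + k - 1) / k = n / k + 1 := by
  rw [show n + 1 + k - 1 = n + k by omega, Nat.add_div_right _ hk]

lemma succ_mod_eq_zero_of_mod_add_one_eq {n : ℕ} (h : n % k + 1 = k) : (n + 1) % k = 0 := by
  have := Nat.div_add_mod n k
  rw [show n + 1 = k * (n / k + 1) by rw [Nat.mul_add_one]; omega, Nat.mul_mod_right]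

lemma succ_mod_of_mod_add_one_lt {n : ℕ} (h : n % k + 1 < k) : (n + 1) % k = n % k + 1 := by
  have := Nat.div_add_mod n k
  rw [show n + 1 = (n % k + 1) + k * (n / k) by omega, Nat.add_mul_mod_self_left,
    Nat.mod_eq_of_lt h]

lemma mod_add_one_le_modStar_succ (hk : 0 < k) (n : ℕ) : n % k + 1 ≤ modStar (n + 1) k := by
  have := Nat.mod_lt n hk
  unfold modStar
  split_ifs with h
  · omega
  · rcases (show n % k + 1 = k ∨ n % k + 1 < k by omega) with hn | hn
    · exact absurd (succ_mod_eq_zero_of_mod_add_one_eq hn) h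
    · rw [succ_mod_of_mod_add_one_lt hn]

end Arithmetic

section Coloring

variable {k : ℕ} {W : Finset V} {f : V → ℕ}

def fullColors (k : ℕ) (W : Finset V) (f : V → ℕ) : Finset ℕ :=
  (W.image f).filter fun c => (W.filter fun v => f v = c).card = (W.card + k - 1) / k

/-- The colors a new vertex whose colored neighbors lie in `N` cannot take. When `k ∣ |W|` the
bound `⌈|W|/k⌉` grows with the new vertex, so full colors are then not excluded. -/
def blockedColors (k : ℕ) (W : Finset V) (f : V → ℕ) (N : Finset V) : Finset ℕ :=
  N.image f ∪ if W.card % k = 0 then ∅ else fullColors k W f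

def HasRoom (G : SimpleGraph V) (k : ℕ) (W : Finset V) (f : V → ℕ) (v : V) : Prop :=
  ∃ N : Finset V, (∀ w ∈ W, G.Adj v w → w ∈ N) ∧ (blockedColors k W f N).card < k

lemma mem_fullColors_of_card_eq {c : ℕ} (hpos : 0 < (W.filter fun v => f v = c).card)
    (h : (W.filter fun v => f v = c).card = (W.card + k - 1) / k) : c ∈ fullColors k W f := by
  obtain ⟨v, hv⟩ := Finset.card_pos.1 hpos
  rw [Finset.mem_filter] at hv
  exact Finset.mem_filter.2 ⟨Finset.mem_image.2 ⟨v, hv⟩, h⟩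

variable [DecidableEq V] {x : V}

lemma card_filter_update_insert (hx : x ∉ W) (f : V → ℕ) (c c' : ℕ) :
    ((insert x W).filter fun v => Function.update f x c v = c').card =
      (W.filter fun v => f v = c').card + if c = c' then 1 else 0 := by
  have hW : (W.filter fun v => Function.update f x c v = c') = W.filter fun v => f v = c' :=
    Finset.filter_congr fun v hv => by rw [Function.update_of_ne (ne_of_mem_of_not_mem hv hx)]
  rw [Finset.filter_insert, Function.update_self, hW]
  split_ifs
  · rw [Finset.card_insert_of_notMem fun hx' => hx (Finset.mem_filter.1 hx').1]
  · rfl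

lemma fullColors_update_insert_subset (hk : 0 < k) (hx : x ∉ W)
    (hf : ∀ c, (W.filter fun v => f v = c).card ≤ (W.card + k - 1) / k) (c : ℕ) :
    fullColors k (insert x W) (Function.update f x c) ⊆
      insert c (if W.card % k = 0 then ∅ else fullColors k W f) := by
  intro c' hc'
  rw [Finset.mem_insert]
  by_cases hcc' : c = c'
  · exact Or.inl hcc'.symm
  right
  have hsize := (Finset.mem_filter.1 hc').2
  rw [card_filter_update_insert hx, if_neg hcc', Finset.card_insert_of_notMem hx,
    add_one_add_sub_one_div hk, add_zero] at hsize
  have hbound := hf c'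
  split_ifs with ht
  · rw [add_sub_one_div_of_mod_eq_zero hk _ ht] at hbound
    exfalso
    lia
  · exact mem_fullColors_of_card_eq (by lia)
      (by rw [add_sub_one_div_of_mod_ne_zero hk _ ht]; exact hsize)

lemma card_filter_update_insert_le (hk : 0 < k) (hx : x ∉ W)
    (hf : ∀ c, (W.filter fun v => f v = c).card ≤ (W.card + k - 1) / k) {c : ℕ}
    (hc : W.card % k ≠ 0 → c ∉ fullColors k W f) (c' : ℕ) :
    ((insert x W).filter fun v => Function.update f x c v = c').card ≤
      ((insert x W).card + k - 1) / k := by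
  rw [card_filter_update_insert hx, Finset.card_insert_of_notMem hx, add_one_add_sub_one_div hk]
  have hbound := hf c'
  by_cases ht : W.card % k = 0
  · rw [add_sub_one_div_of_mod_eq_zero hk _ ht] at hbound
    split_ifs <;> omega
  rw [add_sub_one_div_of_mod_ne_zero hk _ ht] at hbound
  split_ifs with hcc'
  · subst hcc'
    have : (W.filter fun v => f v = c).card ≠ W.card / k + 1 := fun heq =>
      hc ht (mem_fullColors_of_card_eq (by lia)
        (by rw [add_sub_one_div_of_mod_ne_zero hk _ ht]; exact heq))
    omega
  · omega

variable [Fintype V] {G : SimpleGraph V} {L : V → Finset ℕ}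

lemma IsSEColoringOn.card_fullColors_le (hf : IsSEColoringOn G k L W f) (ht : W.card % k ≠ 0) :
    (fullColors k W f).card ≤ W.card % k := by
  have := hf.2.2.2
  rw [modStar, if_neg ht] at this
  exact this

lemma IsSEColoringOn.card_blockedColors_le (hf : IsSEColoringOn G k L W f) (N : Finset V) :
    (blockedColors k W f N).card ≤ N.card + W.card % k := by
  refine (Finset.card_union_le _ _).trans (add_le_add Finset.card_image_le ?_)
  split_ifs with ht
  · simp
  · exact hf.card_fullColors_le ht

lemma IsSEColoringOn.hasRoom (hf : IsSEColoringOn G k L W f) {v : V} {N : Finset V}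
    (hN : ∀ w ∈ W, G.Adj v w → w ∈ N) (hlt : N.card + W.card % k < k) : HasRoom G k W f v :=
  ⟨N, hN, (hf.card_blockedColors_le N).trans_lt hlt⟩

lemma IsSEColoringOn.hasRoom_of_subsingleton (hf : IsSEColoringOn G k L W f) {v : V}
    (hv : (G.neighborSet v ∩ W).Subsingleton) (hlt : W.card % k + 1 < k) :
    HasRoom G k W f v := by
  rcases hv.eq_empty_or_singleton with hv | ⟨w, hw⟩
  · refine hf.hasRoom (N := ∅) (fun u hu hvu => ?_) (by rw [Finset.card_empty]; omega)
    exact (Set.notMem_empty u (hv.subset ⟨hvu, hu⟩)).elim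
  · refine hf.hasRoom (N := {w}) (fun u hu hvu => ?_) (by simpa [add_comm] using hlt)
    simpa using (hw.subset ⟨hvu, hu⟩ : u ∈ ({w} : Set V))

/-- The second conjunct says that `c` is full afterwards or leaves room for one more full color. -/
lemma IsSEColoringOn.update_insert (hk : 0 < k) (hf : IsSEColoringOn G k L W f) (hx : x ∉ W)
    {c : ℕ} (hc : c ∈ L x) (hadj : ∀ w ∈ W, G.Adj x w → f w ≠ c)
    (hfull : W.card % k ≠ 0 → c ∉ fullColors k W f) :
    IsSEColoringOn G k L (insert x W) (Function.update f x c) ∧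
      (insert c (fullColors k (insert x W) (Function.update f x c))).card ≤ W.card % k + 1 := by
  have hupd : ∀ v ∈ W, Function.update f x c v = f v := fun v hv =>
    Function.update_of_ne (ne_of_mem_of_not_mem hv hx) _ _
  have hcard : (insert c (fullColors k (insert x W) (Function.update f x c))).card ≤
      W.card % k + 1 := by
    refine (Finset.card_le_card (Finset.insert_subset (Finset.mem_insert_self _ _)
      (fullColors_update_insert_subset hk hx hf.2.2.1 c))).trans
      ((Finset.card_insert_le _ _).trans ?_)
    split_ifs with ht
    · simp
    · exact Nat.succ_le_succ (hf.card_fullColors_le ht)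
  obtain ⟨hlist, hproper, hsize, -⟩ := hf
  refine ⟨⟨?_, ?_, ?_, ?_⟩, hcard⟩
  · intro v hv
    rcases Finset.mem_insert.1 hv with rfl | hv
    · simpa
    · rw [hupd v hv]
      exact hlist v hv
  · intro u hu v hv huv
    rcases Finset.mem_insert.1 hu with rfl | huW
    · rcases Finset.mem_insert.1 hv with rfl | hvW
      · exact absurd huv G.irrefl
      · rw [Function.update_self, hupd v hvW]
        exact (hadj v hvW huv).symm
    · rcases Finset.mem_insert.1 hv with rfl | hvW
      · rw [Function.update_self, hupd u huW]
        exact hadj u huW huv.symm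
      · rw [hupd u huW, hupd v hvW]
        exact hproper u huW v hvW huv
  · exact card_filter_update_insert_le hk hx hsize hfull
  · show (fullColors k (insert x W) (Function.update f x c)).card ≤ modStar (insert x W).card k
    rw [Finset.card_insert_of_notMem hx]
    exact ((Finset.card_le_card (Finset.subset_insert _ _)).trans hcard).trans
      (mod_add_one_le_modStar_succ hk _)

lemma HasRoom.exists_extension (hroom : HasRoom G k W f x) (hk : 2 ≤ k) (hLx : (L x).card = k)
    (hf : IsSEColoringOn G k L W f) (hx : x ∉ W) :
    ∃ g : V → ℕ, (∀ v ∈ W, g v = f v) ∧ IsSEColoringOn G k L (insert x W) g ∧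
      (blockedColors k (insert x W) g {x}).card < k := by
  obtain ⟨N, hN, hlt⟩ := hroom
  obtain ⟨c, hc, hcN⟩ := Finset.exists_mem_notMem_of_card_lt_card (hlt.trans_eq hLx.symm)
  simp only [blockedColors, Finset.mem_union, not_or] at hcN
  obtain ⟨hse, hcard⟩ := hf.update_insert (by omega) hx hc
    (fun w hw hxw hwc => hcN.1 (Finset.mem_image.2 ⟨w, hN w hw hxw, hwc⟩))
    (fun ht => by simpa [ht] using hcN.2)
  refine ⟨Function.update f x c, fun v hv => Function.update_of_ne (ne_of_mem_of_not_mem hv hx) _ _,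
    hse, ?_⟩
  rw [blockedColors, Finset.image_singleton, Function.update_self, Finset.card_insert_of_notMem hx]
  split_ifs with ht
  · rw [Finset.union_empty, Finset.card_singleton]
    omega
  · rw [← Finset.insert_eq]
    have := Nat.mod_lt W.card (by omega : 0 < k)
    rcases (show W.card % k + 1 = k ∨ W.card % k + 1 < k by omega) with h | h
    · exact absurd (succ_mod_eq_zero_of_mod_add_one_eq h) ht
    · omega

end Coloring

section Bugs

variable {G : SimpleGraph V} {B : Finset V} {r v : V}

lemma neighborSet_subsingleton_of_deg_le_one [Finite V] (h : deg G v ≤ 1) :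
    (G.neighborSet v).Subsingleton :=
  Set.ncard_le_one_iff_subsingleton.1 h

lemma subsingleton_neighborSet_inter_of_deg_le_two [Finite V] {u : V} {T : Set V}
    (h : deg G v ≤ 2) (hu : G.Adj v u) (huT : u ∉ T) : (G.neighborSet v ∩ T).Subsingleton := by
  have : (G.neighborSet v \ {u}).ncard ≤ 1 := by
    rw [Set.ncard_sdiff_singleton_of_mem (s := G.neighborSet v) hu]
    exact Nat.sub_le_of_le_add h
  refine (Set.ncard_le_one_iff_subsingleton.1 this).anti fun w hw => ⟨hw.1, ?_⟩
  rintro rfl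
  exact huT hw.2

lemma IsBug.exists_adj (hB : IsBug G B r) {x y : V} (hx : x ∈ B) (hy : y ∈ B) (hxy : x ≠ y) :
    ∃ z ∈ B, G.Adj x z := by
  have : Nontrivial (B : Set V) := ⟨⟨x, hx⟩, ⟨y, hy⟩, fun h => hxy (congrArg Subtype.val h)⟩
  obtain ⟨⟨z, hz⟩, hxz⟩ := hB.2.1.preconnected.exists_adj_of_nontrivial ⟨x, hx⟩
  exact ⟨z, hz, hxz⟩

/-- Every vertex of the bug other than the root has a neighbor inside it. -/
lemma IsBug.subsingleton_neighborSet_diff [Finite V] (hB : IsBug G B r) (hr : deg G r ≤ 1)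
    (hv : v ∈ B) : (G.neighborSet v \ B).Subsingleton := by
  rcases eq_or_ne v r with rfl | hvr
  · exact (neighborSet_subsingleton_of_deg_le_one hr).anti Set.sdiff_subset
  · obtain ⟨z, hz, hvz⟩ := hB.exists_adj hv hB.1 hvr
    exact subsingleton_neighborSet_inter_of_deg_le_two (hB.2.2 v hv hvr) hvz (fun h => h hz)

lemma IsBug.eq_singleton_of_adj_root [Finite V] (hB : IsBug G B r) (hr : deg G r ≤ 1) {h : V}
    (hh : h ∉ B) (hrh : G.Adj r h) : B = {r} := by
  refine Finset.eq_singleton_iff_unique_mem.2 ⟨hB.1, fun v hv => ?_⟩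
  by_contra hvr
  obtain ⟨z, hz, hrz⟩ := hB.exists_adj hB.1 hv (Ne.symm hvr)
  exact ne_of_mem_of_not_mem hz hh (neighborSet_subsingleton_of_deg_le_one hr hrz hrh)

variable [DecidableEq V] {x : V}

lemma preconnected_induce_erase (hB : (G.induce (B : Set V)).Preconnected)
    (hx : (G.neighborSet x ∩ B).Subsingleton) :
    (G.induce ((B.erase x : Finset V) : Set V)).Preconnected := by
  have hleaf := hB.induce_of_degree_eq_one (s := {v | v.1 ≠ x}) fun v hv a ha b hb => by
    obtain rfl : v.1 = x := not_not.1 hv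
    exact Subtype.ext (hx ⟨ha, a.2⟩ ⟨hb, b.2⟩)
  refine hleaf.map ⟨fun v => ⟨v.1.1, Finset.mem_erase.2 ⟨v.2, v.1.2⟩⟩, fun h => h⟩ ?_
  rintro ⟨v, hv⟩
  exact ⟨⟨⟨v, Finset.mem_of_mem_erase hv⟩, Finset.ne_of_mem_erase hv⟩, rfl⟩

lemma IsBug.erase (hB : IsBug G B r) (hxr : x ≠ r) (hx : (G.neighborSet x ∩ B).Subsingleton) :
    IsBug G (B.erase x) r :=
  ⟨Finset.mem_erase.2 ⟨hxr.symm, hB.1⟩,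
    (connected_iff _).2 ⟨preconnected_induce_erase hB.2.1.preconnected hx,
      ⟨⟨r, Finset.mem_erase.2 ⟨hxr.symm, hB.1⟩⟩⟩⟩,
    fun v hv hvr => hB.2.2 v (Finset.mem_of_mem_erase hv) hvr⟩

lemma IsBug.erase_root (hB : IsBug G B r) (hr : (G.neighborSet r ∩ B).Subsingleton) {r' : V}
    (hr' : r' ∈ B.erase r) : IsBug G (B.erase r) r' :=
  ⟨hr', (connected_iff _).2 ⟨preconnected_induce_erase hB.2.1.preconnected hr, ⟨⟨r', hr'⟩⟩⟩,
    fun v hv _ => hB.2.2 v (Finset.mem_of_mem_erase hv) (Finset.ne_of_mem_erase hv)⟩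

end Bugs

section Extension

variable [Fintype V] [DecidableEq V] {G : SimpleGraph V} {k : ℕ} {L : V → Finset ℕ}
  {W : Finset V} {f : V → ℕ}

/-- The bug is colored from its far end towards the root, so that every vertex after the first
sees only its predecessor among the colored vertices. The last conjunct lets a further vertex
whose only colored neighbor is `r` be colored next. -/
theorem IsBug.exists_extension (hk : 2 ≤ k) (hL : ∀ v, (L v).card = k) {S : Finset V} {r : V}
    (hS : IsBug G S r) (hWS : Disjoint W S) (hf : IsSEColoringOn G k L W f)
    (hr : (G.neighborSet r ∩ ↑(W ∪ S)).Subsingleton) (hroom : ∀ v ∈ S, HasRoom G k W f v) :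
    ∃ g : V → ℕ, (∀ v ∈ W, g v = f v) ∧ IsSEColoringOn G k L (W ∪ S) g ∧
      (blockedColors k (W ∪ S) g {r}).card < k := by
  induction S using Finset.strongInduction generalizing r with
  | H S ih =>
  have hrS := hS.1
  have hrW : r ∉ W ∪ S.erase r := by
    simpa [Finset.notMem_erase] using Finset.disjoint_right.1 hWS hrS
  have hsub : W ∪ S.erase r ⊆ W ∪ S := Finset.union_subset_union_right (Finset.erase_subset _ _)
  obtain ⟨g₀, hg₀W, hg₀, hroom₀⟩ : ∃ g₀ : V → ℕ, (∀ v ∈ W, g₀ v = f v) ∧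
      IsSEColoringOn G k L (W ∪ S.erase r) g₀ ∧ HasRoom G k (W ∪ S.erase r) g₀ r := by
    rcases (S.erase r).eq_empty_or_nonempty with hS' | ⟨y, hy⟩
    · rw [hS', Finset.union_empty]
      exact ⟨f, fun _ _ => rfl, hf, hroom r hrS⟩
    obtain ⟨r', hr'S, hrr'⟩ :=
      hS.exists_adj hrS (Finset.mem_of_mem_erase hy) (Finset.ne_of_mem_erase hy).symm
    have hr'r : r' ≠ r := (G.ne_of_adj hrr').symm
    obtain ⟨g₀, hg₀W, hg₀, hblocked⟩ := ih (S.erase r) (Finset.erase_ssubset hrS)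
      (hS.erase_root (hr.anti (Set.inter_subset_inter_right _
        (Finset.coe_subset.2 Finset.subset_union_right))) (Finset.mem_erase.2 ⟨hr'r, hr'S⟩))
      (Finset.disjoint_of_subset_right (Finset.erase_subset _ _) hWS)
      (subsingleton_neighborSet_inter_of_deg_le_two (hS.2.2 r' hr'S hr'r) hrr'.symm hrW)
      (fun v hv => hroom v (Finset.mem_of_mem_erase hv))
    refine ⟨g₀, hg₀W, hg₀, {r'}, fun w hw hrw => ?_, hblocked⟩
    exact Finset.mem_singleton.2
      (hr ⟨hrw, hsub hw⟩ ⟨hrr', Finset.mem_union_right _ hr'S⟩)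
  obtain ⟨g, hgW, hg, hblocked⟩ := hroom₀.exists_extension hk (hL r) hg₀ hrW
  rw [← Finset.union_insert, Finset.insert_erase hrS] at hg hblocked
  exact ⟨g, fun v hv => (hgW v (Finset.mem_union_left _ hv)).trans (hg₀W v hv), hg, hblocked⟩

/-- When `|W| ≡ -1 (mod k)`, first coloring a vertex `y` without colored neighbors makes `k` divide
`|W|`, after which `h` may see two colored neighbors. -/
lemma IsSEColoringOn.exists_extension_pair (hk : 3 ≤ k) (hL : ∀ v, (L v).card = k)
    (hf : IsSEColoringOn G k L W f) (hcrit : W.card % k + 1 = k) {y h e : V} (hyW : y ∉ W)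
    (hhW : h ∉ insert y W) (hy : ∀ w ∈ W, ¬ G.Adj y w)
    (hh : ∀ w ∈ insert y W, G.Adj h w → w = e ∨ w = y) :
    ∃ g : V → ℕ, (∀ v ∈ W, g v = f v) ∧ IsSEColoringOn G k L (insert h (insert y W)) g := by
  obtain ⟨g₁, hg₁W, hg₁, -⟩ := (hf.hasRoom (N := ∅) (fun w hw hyw => absurd hyw (hy w hw))
    (by simpa using Nat.mod_lt W.card (by omega))).exists_extension (by omega) (hL y) hf hyW
  have hW₁ : (insert y W).card % k = 0 := by
    rw [Finset.card_insert_of_notMem hyW]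
    exact succ_mod_eq_zero_of_mod_add_one_eq hcrit
  obtain ⟨g₂, hg₂W, hg₂, -⟩ := (hg₁.hasRoom (N := {e, y})
    (fun w hw hhw => by simpa using hh w hw hhw)
    (by rw [hW₁]; have := Finset.card_le_two (a := e) (b := y); omega)).exists_extension
    (by omega) (hL h) hg₁ hhW
  exact ⟨g₂, fun v hv => (hg₂W v (Finset.mem_insert_of_mem hv)).trans (hg₁W v hv), hg₂⟩

theorem IsBug.exists_extension_of_not_critical (hk : 2 ≤ k) (hL : ∀ v, (L v).card = k)
    {S : Finset V} {r : V} (hS : IsBug G S r) (hr : deg G r ≤ 1) (hWS : Disjoint W S)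
    (hf : IsSEColoringOn G k L W f) (hW : W.card % k + 1 < k) :
    ∃ g : V → ℕ, (∀ v ∈ W, g v = f v) ∧ IsSEColoringOn G k L (W ∪ S) g :=
  have ⟨g, hgW, hg, _⟩ := hS.exists_extension hk hL hWS hf
    ((neighborSet_subsingleton_of_deg_le_one hr).anti Set.inter_subset_left) fun _ hv =>
      hf.hasRoom_of_subsingleton ((hS.subsingleton_neighborSet_diff hr hv).anti fun _ hw =>
        ⟨hw.1, Finset.disjoint_left.1 hWS hw.2⟩) hW
  ⟨g, hgW, hg⟩

theorem IsBug.exists_extension_of_forall_not_adj (hk : 2 ≤ k) (hL : ∀ v, (L v).card = k)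
    {S : Finset V} {r : V} (hS : IsBug G S r) (hr : deg G r ≤ 1) (hWS : Disjoint W S)
    (hf : IsSEColoringOn G k L W f) (hSW : ∀ v ∈ S, ∀ w ∈ W, ¬ G.Adj v w) :
    ∃ g : V → ℕ, (∀ v ∈ W, g v = f v) ∧ IsSEColoringOn G k L (W ∪ S) g :=
  have ⟨g, hgW, hg, _⟩ := hS.exists_extension hk hL hWS hf
    ((neighborSet_subsingleton_of_deg_le_one hr).anti Set.inter_subset_left) fun v hv =>
      hf.hasRoom (N := ∅) (fun w hw hvw => absurd hvw (hSW v hv w hw))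
        (by simpa using Nat.mod_lt W.card (by omega))
  ⟨g, hgW, hg⟩

theorem IsBug.exists_extension_erase_of_not_critical (hk : 2 ≤ k) (hL : ∀ v, (L v).card = k)
    {B : Finset V} {r : V} (hB : IsBug G B r) (hr : deg G r ≤ 1) {y h : V} (hy : y ∈ B)
    (hh : h ∉ B) (hyh : G.Adj y h) (hWB : Disjoint W (B.erase y))
    (hf : IsSEColoringOn G k L W f) (hW : W.card % k + 1 < k) :
    ∃ g : V → ℕ, (∀ v ∈ W, g v = f v) ∧ IsSEColoringOn G k L (W ∪ B.erase y) g := by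
  rcases eq_or_ne y r with rfl | hyr
  · rw [hB.eq_singleton_of_adj_root hr hh hyh, Finset.erase_singleton, Finset.union_empty]
    exact ⟨f, fun _ _ => rfl, hf⟩
  exact (hB.erase hyr (subsingleton_neighborSet_inter_of_deg_le_two (hB.2.2 y hy hyr) hyh hh))
    |>.exists_extension_of_not_critical hk hL hr hWB hf hW

/-- If the end `h` of the bug has a colored neighbor `e` while `|W| ≡ -1 (mod k)`, the neighbor
`y` of `h` in the bug is colored before `h`, and the rest of the bug after both. -/
theorem IsBug.exists_extension_of_critical (hk : 3 ≤ k) (hL : ∀ v, (L v).card = k)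
    {B : Finset V} {r : V} (hB : IsBug G B r) (hr : deg G r ≤ 1) (hB2 : 2 ≤ B.card)
    (hWB : Disjoint W B) (hf : IsSEColoringOn G k L W f) (hcrit : W.card % k + 1 = k)
    {h e : V} (hh : h ∈ B) (he : e ∉ B) (hhe : G.Adj h e) :
    ∃ g : V → ℕ, (∀ v ∈ W, g v = f v) ∧ IsSEColoringOn G k L (W ∪ B) g := by
  obtain ⟨y, hyB, hyh⟩ := Finset.exists_mem_ne hB2 h
  obtain ⟨y, hyB, hhy⟩ := hB.exists_adj hh hyB hyh.symm
  have hrsub := neighborSet_subsingleton_of_deg_le_one hr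
  have hhr : h ≠ r := by
    rintro rfl
    exact ne_of_mem_of_not_mem hyB he (hrsub hhy hhe)
  have hB' : IsBug G (B.erase h) r :=
    hB.erase hhr (subsingleton_neighborSet_inter_of_deg_le_two (hB.2.2 h hh hhr) hhe he)
  have hyB' : y ∈ B.erase h := Finset.mem_erase.2 ⟨(G.ne_of_adj hhy).symm, hyB⟩
  have hWB' : ∀ w ∈ W, w ∉ B := fun w hw => Finset.disjoint_left.1 hWB hw
  have hyW : y ∉ W := fun hyW => hWB' y hyW hyB
  have hhW : h ∉ insert y W := by simpa [G.ne_of_adj hhy] using fun hhW => hWB' h hhW hh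
  have hy_nbrs : ∀ w ∈ W, ¬ G.Adj y w := fun w hw hyw => hWB' h (hB'.subsingleton_neighborSet_diff
    hr hyB' ⟨hyw, fun hwB => hWB' w hw (Finset.mem_of_mem_erase hwB)⟩ ⟨hhy.symm, by simp⟩ ▸ hw) hh
  have hh_nbrs : ∀ w ∈ insert y W, G.Adj h w → w = e ∨ w = y := fun w hw hhw =>
    (Finset.mem_insert.1 hw).symm.imp
      (fun hwW => hB.subsingleton_neighborSet_diff hr hh ⟨hhw, hWB' w hwW⟩ ⟨hhe, he⟩) id
  obtain ⟨g₂, hg₂W, hg₂⟩ := hf.exists_extension_pair hk hL hcrit hyW hhW hy_nbrs hh_nbrs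
  have hunion : insert h (insert y W) ∪ (B.erase h).erase y = W ∪ B := by
    rw [Finset.insert_union, Finset.insert_union, ← Finset.union_insert, Finset.insert_erase hyB',
      ← Finset.union_insert, Finset.insert_erase hh]
  rw [← hunion]
  have hW₂ : (insert h (insert y W)).card % k = 1 := by
    have h0 := succ_mod_eq_zero_of_mod_add_one_eq hcrit
    rw [Finset.card_insert_of_notMem hhW, Finset.card_insert_of_notMem hyW,
      succ_mod_of_mod_add_one_lt (by omega), h0]
  have hdisj : Disjoint (insert h (insert y W)) ((B.erase h).erase y) := by
    simpa [Finset.disjoint_insert_left] using Finset.disjoint_of_subset_right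
      ((Finset.erase_subset _ _).trans (Finset.erase_subset _ _)) hWB
  obtain ⟨g, hgW, hg⟩ := hB'.exists_extension_erase_of_not_critical (by omega) hL hr hyB'
    (Finset.notMem_erase h B) hhy.symm hdisj hg₂ (by omega)
  exact ⟨g, fun v hv => (hgW v (by simp [hv])).trans (hg₂W v hv), hg⟩

end Extension

/-- Let `B ⊆ G` be a bug whose root `r` has degree at most 1 in `G`. Then
`B` is safe in `G` provided `|B| ≥ 2`, or there are no edges between `B` and `G − B`, or
`|G| ≢ 0 (mod k)`. -/
theorem stmt10 {V : Type*} [Fintype V] [DecidableEq V] (G : SimpleGraph V)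
    (k : ℕ) (hk : 3 ≤ k) (L : V → Finset ℕ) (hL : ∀ v, (L v).card = k)
    (B : Finset V) (r : V) (hbug : IsBug G B r)
    (hdr : deg G r ≤ 1)
    (hcase : 2 ≤ B.card ∨ (∀ u ∈ B, ∀ w, w ∉ B → ¬ G.Adj u w) ∨ Fintype.card V % k ≠ 0) :
    SafeIn G k L Finset.univ B := by
  intro f hf
  set W := Finset.univ \ B
  have hWB : Disjoint W B := Finset.sdiff_disjoint
  suffices ∃ g : V → ℕ, (∀ v ∈ W, g v = f v) ∧ IsSEColoringOn G k L (W ∪ B) g by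
    rwa [Finset.sdiff_union_of_subset (Finset.subset_univ B)] at this
  have hWk := Nat.mod_lt W.card (by omega : 0 < k)
  by_cases hcrit : W.card % k + 1 ≠ k
  · exact hbug.exists_extension_of_not_critical (by omega) hL hdr hWB hf (by omega)
  push Not at hcrit
  by_cases hedge : ∃ h ∈ B, ∃ e ∈ W, G.Adj h e
  · obtain ⟨h, hhB, e, heW, he⟩ := hedge
    have heB : e ∉ B := Finset.disjoint_left.1 hWB heW
    have hB2 : 2 ≤ B.card := by
      rcases hcase with hB2 | hiso | hmod
      · exact hB2
      · exact absurd he (hiso h hhB e heB)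
      · have hV : W.card + B.card = Fintype.card V := by
          rw [Finset.card_sdiff_add_card_eq_card (Finset.subset_univ B), Finset.card_univ]
        by_contra hB1
        have hB : B.card = 1 := by have := Finset.card_pos.2 ⟨h, hhB⟩; omega
        exact hmod (by rw [← hV, hB]; exact succ_mod_eq_zero_of_mod_add_one_eq hcrit)
    exact hbug.exists_extension_of_critical hk hL hdr hB2 hWB hf hcrit hhB heB he
  push Not at hedge
  exact hbug.exists_extension_of_forall_not_adj (by omega) hL hdr hWB hf hedge
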